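/- Let f : [0,1] → 2^[0,1] be upper semicontinuous. If f has the Intermediate Value Property, then f(x) is connected for every x ∈ [0,1]. -/

import Mathlib

/-! A gap `c` in `f x`, with values of `f x` on both sides of it, cannot exist: by upper
semicontinuity `c` is omitted by all values of `f` on a small interval around `x`, yet any
value at a nearby `x' ≠ x` lies on one side of `c` while `f x` reaches the other, so the
intermediate value property puts `c` into a value of `f` strictly between `x` and `x'`. -/

open Set

/-- Graph of a set-valued function on [0,1]. -/
def SVGraph (f : ℝ → Set ℝ) : Set (ℝ × ℝ) :=
  {p | p.1 ∈ Icc (0:ℝ) 1 ∧ p.2 ∈ f p.1}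

/-- f has nonempty compact values contained in [0,1]. -/
def SV (f : ℝ → Set ℝ) : Prop :=
  ∀ x ∈ Icc (0:ℝ) 1, (f x).Nonempty ∧ IsCompact (f x) ∧ f x ⊆ Icc (0:ℝ) 1

/-- Upper semicontinuity on [0,1]. -/
def USC (f : ℝ → Set ℝ) : Prop :=
  ∀ x ∈ Icc (0:ℝ) 1, ∀ U : Set ℝ, IsOpen U → f x ⊆ U →
    ∃ V : Set ℝ, IsOpen V ∧ x ∈ V ∧ ∀ v ∈ V ∩ Icc (0:ℝ) 1, f v ⊆ U

/-- Weak Intermediate Value Property. -/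
def WIVP (f : ℝ → Set ℝ) : Prop :=
  ∀ x₁ ∈ Icc (0:ℝ) 1, ∀ x₂ ∈ Icc (0:ℝ) 1, x₁ ≠ x₂ → ∀ y₁ ∈ f x₁,
    ∃ y₂ ∈ f x₂, ∀ y ∈ uIcc y₁ y₂, ∃ x ∈ uIcc x₁ x₂, y ∈ f x

/-- Intermediate Value Property. -/
def IVP (f : ℝ → Set ℝ) : Prop :=
  ∀ x₁ ∈ Icc (0:ℝ) 1, ∀ x₂ ∈ Icc (0:ℝ) 1, x₁ ≠ x₂ → ∀ y₁ ∈ f x₁, ∀ y₂ ∈ f x₂, y₁ ≠ y₂ →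
    ∀ y ∈ Ioo (min y₁ y₂) (max y₁ y₂), ∃ x ∈ Ioo (min x₁ x₂) (max x₁ x₂), y ∈ f x

open Topology

lemma exists_ne_uIcc_subset_of_mem_Icc {a b x : ℝ} {V : Set ℝ} (hab : a < b) (hx : x ∈ Icc a b)
    (hV : V ∈ 𝓝 x) : ∃ x' ∈ Icc a b, x' ≠ x ∧ uIcc x x' ⊆ V := by
  obtain ⟨ε, hε, hball⟩ := Metric.mem_nhds_iff.1 hV
  set d := min (ε / 2) ((b - a) / 2)
  have hd : 0 < d := lt_min (half_pos hε) (half_pos (sub_pos.2 hab))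
  have hdε : d < ε := (min_le_left _ _).trans_lt (half_lt_self hε)
  have hdab : d ≤ (b - a) / 2 := min_le_right _ _
  have hsub : ∀ x', |x' - x| < ε → uIcc x x' ⊆ V := fun x' hx' =>
    ((convex_ball x ε).ordConnected.uIcc_subset (Metric.mem_ball_self hε)
      (by rwa [Metric.mem_ball, Real.dist_eq])).trans hball
  rcases le_or_gt x ((a + b) / 2) with hmid | hmid
  · refine ⟨x + d, ⟨by linarith [hx.1], by linarith⟩, by linarith, hsub _ ?_⟩
    rwa [add_sub_cancel_left, abs_of_pos hd]
  · refine ⟨x - d, ⟨by linarith, by linarith [hx.2]⟩, by linarith, hsub _ ?_⟩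
    rwa [sub_sub_cancel_left, abs_neg, abs_of_pos hd]

lemma USC.exists_mem_nhds_forall_notMem {f : ℝ → Set ℝ} (hf : USC f) {x c : ℝ}
    (hx : x ∈ Icc 0 1) (hcx : c ∉ f x) : ∃ V ∈ 𝓝 x, ∀ v ∈ V ∩ Icc 0 1, c ∉ f v := by
  obtain ⟨V, hVo, hxV, hV⟩ := hf x hx {c}ᶜ isOpen_compl_singleton
    (subset_compl_singleton_iff.2 hcx)
  exact ⟨V, hVo.mem_nhds hxV, fun v hv hcv => hV v hv hcv rfl⟩

lemma IVP.exists_mem_Ioo_of_lt_of_lt {f : ℝ → Set ℝ} (hf : IVP f) {x x' a b c : ℝ}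
    (hx : x ∈ Icc 0 1) (hx' : x' ∈ Icc 0 1) (hne : x ≠ x') (ha : a ∈ f x) (hb : b ∈ f x)
    (hac : a < c) (hcb : c < b) (hfx' : (f x').Nonempty) (hcx' : c ∉ f x') :
    ∃ z ∈ Ioo (min x x') (max x x'), c ∈ f z := by
  obtain ⟨y, hy⟩ := hfx'
  rcases lt_or_gt_of_ne (ne_of_mem_of_not_mem hy hcx') with hyc | hcy
  · exact hf x hx x' hx' hne b hb y hy (hyc.trans hcb).ne'
      c ⟨min_lt_of_right_lt hyc, lt_max_of_lt_left hcb⟩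
  · exact hf x hx x' hx' hne a ha y hy (hac.trans hcy).ne
      c ⟨min_lt_of_left_lt hac, lt_max_of_lt_right hcy⟩

theorem stmt4 (f : ℝ → Set ℝ) (hSV : SV f) (husc : USC f) (hivp : IVP f) :
    ∀ x ∈ Icc (0:ℝ) 1, IsConnected (f x) := by
  intro x hx
  refine ⟨(hSV x hx).1, isPreconnected_iff_ordConnected.2 ⟨fun a ha b hb c hc => ?_⟩⟩
  by_contra hcx
  have hac : a < c := hc.1.lt_of_ne (by rintro rfl; exact hcx ha)
  have hcb : c < b := hc.2.lt_of_ne (by rintro rfl; exact hcx hb)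
  obtain ⟨V, hV, hcV⟩ := husc.exists_mem_nhds_forall_notMem hx hcx
  obtain ⟨x', hx', hne, hxx'⟩ := exists_ne_uIcc_subset_of_mem_Icc zero_lt_one hx hV
  have hc_seg : ∀ z ∈ uIcc x x', c ∉ f z := fun z hz =>
    hcV z ⟨hxx' hz, ordConnected_Icc.uIcc_subset hx hx' hz⟩
  obtain ⟨z, hz, hcz⟩ := hivp.exists_mem_Ioo_of_lt_of_lt hx hx' hne.symm ha hb hac hcb
    (hSV x' hx').1 (hc_seg x' right_mem_uIcc)
  exact hc_seg z (Ioo_subset_Icc_self hz) hcz
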